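/- arXiv:1202.6565 — 6 statements merged into one kernel-verified Lean document; each statement's English description precedes it below -/
import Mathlib

section
/- Let f : ℍ² → 𝔻 be the Möbius transformation f(z) = (z − i)/(z + i) of the upper half plane onto the unit disk. Then for all x, y ∈ ℍ²: j_𝔻(f(x), f(y)) ≤ 2 · j_{ℍ²}(x, y). -/
/-!
Write `A = ‖x + i‖`, `B = ‖y + i‖` and `d = ‖x - y‖` for the Cayley transform `f`. Then
`‖f x - f y‖ = 2d / (AB)` and `1 - ‖f x‖ ≥ 2 Im x / A²`, so that, using `A ≤ B + d` and `Im y < B`,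
`‖f x - f y‖ / (1 - ‖f x‖) ≤ dA / (B Im x) ≤ s + s²` with `s = d / min (Im x) (Im y)`.
Hence `1 + ‖f x - f y‖ / min (1 - ‖f x‖) (1 - ‖f y‖) ≤ 1 + s + s² ≤ (1 + s)²`; take logarithms.
-/

open Metric Filter Topology Set

/-- The distance ratio metric of a domain `G`:
`j_G(x,y) = log(1 + |x-y| / min(d(x,∂G), d(y,∂G)))`. -/
noncomputable def jdist {E : Type*} [PseudoMetricSpace E] (G : Set E) (x y : E) : ℝ :=
  Real.log (1 + dist x y /
    min (Metric.infDist x (frontier G)) (Metric.infDist y (frontier G)))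

section Sphere

variable {E : Type*} [NormedAddCommGroup E] [NormedSpace ℝ E] [Nontrivial E]

lemma exists_norm_eq_one_and_norm_smul_eq (x : E) : ∃ v : E, ‖v‖ = 1 ∧ ‖x‖ • v = x := by
  rcases eq_or_ne x 0 with rfl | hx
  · obtain ⟨v, hv⟩ := exists_norm_eq E zero_le_one
    exact ⟨v, hv, by simp⟩
  · exact ⟨(‖x‖⁻¹ : ℝ) • x, norm_smul_inv_norm (𝕜 := ℝ) hx,
      smul_inv_smul₀ (norm_ne_zero_iff.2 hx) x⟩

lemma Metric.infDist_sphere_of_mem_ball {c w : E} {r : ℝ} (hw : w ∈ ball c r) :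
    infDist w (sphere c r) = r - dist w c := by
  have hr : 0 < r := pos_of_mem_ball hw
  rw [mem_ball] at hw
  apply le_antisymm
  · obtain ⟨v, hv, hwv⟩ := exists_norm_eq_one_and_norm_smul_eq (w - c)
    have hmem : c + r • v ∈ sphere c r := by
      simp [norm_smul, hv, abs_of_pos hr]
    calc infDist w (sphere c r) ≤ dist w (c + r • v) := infDist_le_dist_of_mem hmem
      _ = ‖(dist w c - r) • v‖ := by
        rw [dist_eq_norm, dist_eq_norm, sub_smul, hwv, sub_add_eq_sub_sub]
      _ = r - dist w c := by
        rw [norm_smul, hv, mul_one, Real.norm_eq_abs, abs_of_neg (by linarith), neg_sub]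
  · refine (le_infDist (NormedSpace.sphere_nonempty.2 hr.le)).2 fun u hu => ?_
    rw [mem_sphere] at hu
    linarith [dist_triangle u w c, dist_comm u w]

lemma Metric.infDist_frontier_ball_of_mem {c w : E} {r : ℝ} (hw : w ∈ ball c r) :
    infDist w (frontier (ball c r)) = r - dist w c := by
  rw [frontier_ball c (pos_of_mem_ball hw).ne', infDist_sphere_of_mem_ball hw]

end Sphere

lemma Complex.infDist_frontier_upperHalfPlane (z : ℂ) :
    infDist z (frontier {w : ℂ | 0 < w.im}) = |z.im| := by
  rw [Complex.frontier_setOfPred_lt_im]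
  apply le_antisymm
  · calc infDist z {w : ℂ | w.im = 0} ≤ dist z z.re := infDist_le_dist_of_mem (by simp)
      _ = |z.im| := by
        rw [Complex.dist_of_re_eq (by simp)]
        simp
  · refine (le_infDist ⟨0, by simp⟩).2 fun w hw => ?_
    simpa [hw.out, Complex.dist_eq] using Complex.abs_im_le_norm (z - w)

open Complex

noncomputable def cayley (z : ℂ) : ℂ := (z - I) / (z + I)

section Cayley

variable {x y : ℂ}

lemma add_I_ne_zero_of_im_pos (hx : 0 < x.im) : x + I ≠ 0 := by
  intro h
  have := congrArg Complex.im h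
  simp only [add_im, I_im, zero_im] at this
  linarith

lemma norm_add_I_sq_sub_norm_sub_I_sq (x : ℂ) : ‖x + I‖ ^ 2 - ‖x - I‖ ^ 2 = 4 * x.im := by
  simp only [Complex.sq_norm, normSq_apply, add_re, add_im, sub_re, sub_im, I_re, I_im]
  ring

lemma im_lt_norm_add_I (x : ℂ) : x.im < ‖x + I‖ := by
  have := im_le_norm (x + I)
  simp only [add_im, I_im] at this
  linarith

lemma norm_sub_I_lt_norm_add_I (hx : 0 < x.im) : ‖x - I‖ < ‖x + I‖ := by
  have := norm_add_I_sq_sub_norm_sub_I_sq x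
  exact lt_of_pow_lt_pow_left₀ 2 (norm_nonneg _) (by linarith)

lemma norm_cayley_lt_one (hx : 0 < x.im) : ‖cayley x‖ < 1 := by
  rw [cayley, norm_div, div_lt_one (norm_pos_iff.2 (add_I_ne_zero_of_im_pos hx))]
  exact norm_sub_I_lt_norm_add_I hx

lemma two_mul_im_div_le_one_sub_norm_cayley (hx : 0 < x.im) :
    2 * x.im / ‖x + I‖ ^ 2 ≤ 1 - ‖cayley x‖ := by
  have hA := norm_pos_iff.2 (add_I_ne_zero_of_im_pos hx)
  -- `4 Im x = (‖x + I‖ - ‖x - I‖) (‖x + I‖ + ‖x - I‖)` and the second factor is at most `2 ‖x + I‖`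
  have key : 2 * x.im ≤ (‖x + I‖ - ‖x - I‖) * ‖x + I‖ := by
    nlinarith [norm_add_I_sq_sub_norm_sub_I_sq x]
  rw [cayley, norm_div, one_sub_div hA.ne', div_le_div_iff₀ (by positivity) hA]
  nlinarith

lemma cayley_sub_cayley (hx : 0 < x.im) (hy : 0 < y.im) :
    cayley x - cayley y = 2 * I * (x - y) / ((x + I) * (y + I)) := by
  have := add_I_ne_zero_of_im_pos hx
  have := add_I_ne_zero_of_im_pos hy
  rw [cayley, cayley]
  field_simp
  ring

lemma dist_cayley (hx : 0 < x.im) (hy : 0 < y.im) :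
    dist (cayley x) (cayley y) = 2 * dist x y / (‖x + I‖ * ‖y + I‖) := by
  simp [dist_eq, cayley_sub_cayley hx hy]

lemma dist_cayley_le {m : ℝ} (hm : 0 < m) (hx : m ≤ x.im) (hy : m ≤ y.im) :
    dist (cayley x) (cayley y) ≤
      (dist x y / m + (dist x y / m) ^ 2) * (1 - ‖cayley x‖) := by
  have hx₀ : 0 < x.im := hm.trans_le hx
  have hy₀ : 0 < y.im := hm.trans_le hy
  have hB : y.im < ‖y + I‖ := im_lt_norm_add_I y
  have hB₀ : 0 < ‖y + I‖ := hy₀.trans hB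
  have hAB : ‖x + I‖ ≤ ‖y + I‖ + dist x y := by
    simpa [dist_eq] using norm_le_norm_add_norm_sub' (x + I) (y + I)
  have hfx := norm_cayley_lt_one hx₀
  calc dist (cayley x) (cayley y)
      = dist x y * ‖x + I‖ / (‖y + I‖ * x.im) * (2 * x.im / ‖x + I‖ ^ 2) := by
        rw [dist_cayley hx₀ hy₀]
        field_simp
    _ ≤ dist x y * (‖y + I‖ + dist x y) / (‖y + I‖ * x.im) * (1 - ‖cayley x‖) := by
        gcongr
        exact two_mul_im_div_le_one_sub_norm_cayley hx₀
    _ = (dist x y / x.im + dist x y ^ 2 / (x.im * ‖y + I‖)) * (1 - ‖cayley x‖) := by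
        field_simp
    _ ≤ (dist x y / m + (dist x y / m) ^ 2) * (1 - ‖cayley x‖) := by
        rw [div_pow, sq m]
        gcongr
        linarith

end Cayley

lemma Real.log_one_add_div_min_le_two_mul_log {s t a b : ℝ} (hs : 0 ≤ s) (ht : 0 ≤ t)
    (ha : 0 < a) (hb : 0 < b) (hta : t ≤ (s + s ^ 2) * a) (htb : t ≤ (s + s ^ 2) * b) :
    Real.log (1 + t / min a b) ≤ 2 * Real.log (1 + s) := by
  have hmin : t / min a b ≤ s + s ^ 2 :=
    div_le_of_le_mul₀ (le_min ha.le hb.le) (by positivity)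
      (by rw [mul_min_of_nonneg _ _ (by positivity)]; exact le_min hta htb)
  calc Real.log (1 + t / min a b) ≤ Real.log ((1 + s) ^ 2) :=
        Real.log_le_log (by positivity) (by nlinarith)
    _ = 2 * Real.log (1 + s) := by simp [Real.log_pow]

/-- The Möbius transformation `f(z) = (z-i)/(z+i)` of the upper half plane onto
the unit disk satisfies `j_𝔻(f x, f y) ≤ 2 j_{ℍ²}(x, y)`. -/
theorem cayley_jdist_lipschitz (f : ℂ → ℂ)
    (hf : ∀ z, f z = (z - Complex.I) / (z + Complex.I)) :
    ∀ x ∈ {z : ℂ | 0 < z.im}, ∀ y ∈ {z : ℂ | 0 < z.im},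
      jdist (Metric.ball (0 : ℂ) 1) (f x) (f y) ≤ 2 * jdist {z : ℂ | 0 < z.im} x y := by
  intro x (hx : 0 < x.im) y (hy : 0 < y.im)
  obtain rfl : f = cayley := funext hf
  have hm : 0 < min x.im y.im := lt_min hx hy
  have hfx := norm_cayley_lt_one hx
  have hfy := norm_cayley_lt_one hy
  rw [jdist, jdist, infDist_frontier_ball_of_mem (mem_ball_zero_iff.2 hfx),
    infDist_frontier_ball_of_mem (mem_ball_zero_iff.2 hfy), infDist_frontier_upperHalfPlane,
    infDist_frontier_upperHalfPlane, abs_of_pos hx, abs_of_pos hy, dist_zero_right,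
    dist_zero_right]
  refine Real.log_one_add_div_min_le_two_mul_log (by positivity) dist_nonneg
    (by linarith) (by linarith) (dist_cayley_le hm (min_le_left _ _) (min_le_right _ _)) ?_
  rw [dist_comm, dist_comm x, min_comm]
  exact dist_cayley_le (by rwa [min_comm]) (min_le_left _ _) (min_le_right _ _)
end

section
/- Let f : 𝔻 → ℍ² be the Möbius transformation f(z) = i(1 + z)/(1 − z) of the unit disk onto the upper half plane. Then for all x, y ∈ 𝔻: j_{ℍ²}(f(x), f(y)) ≤ 2 · j_𝔻(x, y). Moreover the constant 2 is best possible: for x = t and y = −t with t ∈ (0,1), equality j_{ℍ²}(f(x), f(y)) = 2 · j_𝔻(x, y) holds. -/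
/-!
Let `ρ` denote hyperbolic distance. The map `f` is a hyperbolic isometry from `𝔻` onto `ℍ²`, and
`j ≤ ρ` in `ℍ²` while `ρ ≤ 2 j` in `𝔻`. Both comparisons are made on `cosh`, using
`cosh ρ_ℍ(z, w) = 1 + |z - w|² / (2 Im z Im w)` and
`cosh ρ_𝔻(x, y) = 1 + 2 |x - y|² / ((1 - |x|²)(1 - |y|²))`: the first reduces to
`|Im z - Im w| ≤ |z - w|`, the second to `|x - y| ≤ |x| + |y|`, and both are equalities for
`x = t`, `y = -t`.
-/

open Metric Filter Topology Set

open Complex (I)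
open scoped UpperHalfPlane

theorem jdist_comm {E : Type*} [PseudoMetricSpace E] (G : Set E) (x y : E) :
    jdist G x y = jdist G y x := by
  rw [jdist, jdist, dist_comm, min_comm]

theorem jdist_nonneg {E : Type*} [PseudoMetricSpace E] (G : Set E) (x y : E) :
    0 ≤ jdist G x y :=
  Real.log_nonneg <| le_add_of_nonneg_right <|
    div_nonneg dist_nonneg (le_min infDist_nonneg infDist_nonneg)

theorem Complex.infDist_frontier_setOf_lt_im (a : ℝ) (z : ℂ) :
    infDist z (frontier {w : ℂ | a < w.im}) = |z.im - a| := by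
  rw [Complex.frontier_setOfPred_lt_im]
  apply le_antisymm
  · have hw : (⟨z.re, a⟩ : ℂ) ∈ {w : ℂ | w.im = a} := rfl
    refine (infDist_le_dist_of_mem hw).trans_eq ?_
    rw [Complex.dist_eq, show z - ⟨z.re, a⟩ = ((z.im - a : ℝ) : ℂ) * I by
      apply Complex.ext <;> simp, norm_mul, Complex.norm_I, mul_one, Complex.norm_real,
      Real.norm_eq_abs]
  · have hne : {w : ℂ | w.im = a}.Nonempty := ⟨⟨0, a⟩, rfl⟩
    refine (le_infDist hne).2 fun w (hw : w.im = a) => ?_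
    simpa [hw, dist_eq_norm] using Complex.abs_im_le_norm (z - w)

theorem jdist_upperHalfPlane {z w : ℂ} (hz : 0 < z.im) (hw : 0 < w.im) :
    jdist {z : ℂ | 0 < z.im} z w = Real.log (1 + dist z w / min z.im w.im) := by
  simp only [jdist, Complex.infDist_frontier_setOf_lt_im, sub_zero, abs_of_pos hz, abs_of_pos hw]

theorem UpperHalfPlane.jdist_le_dist (z w : ℍ) : jdist {z : ℂ | 0 < z.im} z w ≤ dist z w := by
  wlog h : z.im ≤ w.im generalizing z w
  · simpa only [jdist_comm, dist_comm] using this w z (le_of_not_ge h)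
  refine (Real.cosh_strictMonoOn.le_iff_le (jdist_nonneg _ _ _) dist_nonneg).1 ?_
  rw [jdist_upperHalfPlane z.im_pos w.im_pos, cosh_dist, coe_im, coe_im, min_eq_left h]
  set d := dist (z : ℂ) w
  have hz := z.im_pos
  have hd : 0 ≤ d := dist_nonneg
  have hvd : w.im ≤ z.im + d := by
    have := Complex.abs_im_le_norm (w - z)
    rw [Complex.sub_im, ← dist_eq_norm, dist_comm, coe_im, coe_im] at this
    linarith [le_abs_self (w.im - z.im)]
  have hcosh : Real.cosh (Real.log (1 + d / z.im)) = 1 + d ^ 2 / (2 * z.im * (z.im + d)) := by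
    rw [Real.cosh_log (by positivity)]
    field_simp
    ring
  rw [hcosh]
  gcongr

section NormedSpace

variable {E : Type*} [NormedAddCommGroup E] [NormedSpace ℝ E] [Nontrivial E]

theorem infDist_sphere_of_mem_closedBall {x c : E} {r : ℝ} (hx : x ∈ closedBall c r) :
    infDist x (sphere c r) = r - dist x c := by
  rw [mem_closedBall] at hx
  obtain ⟨u, hu, hxu⟩ : ∃ u : E, ‖u‖ = 1 ∧ x - c = ‖x - c‖ • u := by
    rcases eq_or_ne x c with rfl | hne
    · obtain ⟨u, hu⟩ := exists_norm_eq E zero_le_one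
      exact ⟨u, hu, by simp⟩
    · have : ‖x - c‖ ≠ 0 := norm_ne_zero_iff.2 (sub_ne_zero.2 hne)
      exact ⟨‖x - c‖⁻¹ • (x - c), by simp [norm_smul, this], by simp [smul_smul, this]⟩
  have hr : 0 ≤ r := dist_nonneg.trans hx
  apply le_antisymm
  · have hy : c + r • u ∈ sphere c r := by simp [norm_smul, hu, abs_of_nonneg hr]
    refine (infDist_le_dist_of_mem hy).trans_eq ?_
    simp only [dist_eq_norm] at hx ⊢
    rw [show x - (c + r • u) = (‖x - c‖ - r) • u by rw [sub_smul, ← hxu]; abel,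
      norm_smul, hu, mul_one, Real.norm_eq_abs, abs_of_nonpos (by linarith), neg_sub]
  · refine (le_infDist (NormedSpace.sphere_nonempty.2 hr)).2 fun y hy => ?_
    rw [mem_sphere] at hy
    linarith [dist_triangle y x c, dist_comm x y]

theorem jdist_ball {c x y : E} {r : ℝ} (hx : x ∈ ball c r) (hy : y ∈ ball c r) :
    jdist (ball c r) x y = Real.log (1 + dist x y / min (r - dist x c) (r - dist y c)) := by
  rw [jdist, frontier_ball c (dist_nonneg.trans_lt (mem_ball.1 hx)).ne',
    infDist_sphere_of_mem_closedBall (ball_subset_closedBall hx),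
    infDist_sphere_of_mem_closedBall (ball_subset_closedBall hy)]

theorem four_mul_sq_mul_sq_le {a b c : ℝ} (hb : 0 ≤ b) (hba : b ≤ a) (ha : a < 1) (hc : 0 ≤ c)
    (hcab : c ≤ a + b) :
    4 * (1 - a) ^ 2 * (1 - a + c) ^ 2 ≤ (2 * (1 - a) + c) ^ 2 * (1 - a ^ 2) * (1 - b ^ 2) := by
  have h1 : 2 * (1 - a + c) ≤ (2 * (1 - a) + c) * (1 + a) := by nlinarith
  have h2 : (1 - a ^ 2) * (1 - a ^ 2) ≤ (1 - a ^ 2) * (1 - b ^ 2) :=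
    mul_le_mul_of_nonneg_left (by nlinarith) (by nlinarith)
  calc 4 * (1 - a) ^ 2 * (1 - a + c) ^ 2 = (1 - a) ^ 2 * (2 * (1 - a + c)) ^ 2 := by ring
    _ ≤ (1 - a) ^ 2 * ((2 * (1 - a) + c) * (1 + a)) ^ 2 := by gcongr
    _ = (2 * (1 - a) + c) ^ 2 * ((1 - a ^ 2) * (1 - a ^ 2)) := by ring
    _ ≤ (2 * (1 - a) + c) ^ 2 * ((1 - a ^ 2) * (1 - b ^ 2)) := by gcongr
    _ = _ := by ring

theorem one_add_two_mul_dist_sq_div_le_cosh_two_mul_jdist {x y : E} (hx : ‖x‖ < 1)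
    (hy : ‖y‖ < 1) :
    1 + 2 * dist x y ^ 2 / ((1 - ‖x‖ ^ 2) * (1 - ‖y‖ ^ 2)) ≤
      Real.cosh (2 * jdist (ball (0 : E) 1) x y) := by
  wlog h : ‖y‖ ≤ ‖x‖ generalizing x y
  · simpa only [jdist_comm, dist_comm, mul_comm] using this hy hx (le_of_not_ge h)
  rw [jdist_ball (mem_ball_zero_iff.2 hx) (mem_ball_zero_iff.2 hy), dist_zero_right,
    dist_zero_right, min_eq_left (by linarith)]
  set c := dist x y
  have hm : 0 < 1 - ‖x‖ := by linarith
  have hc : 0 ≤ c := dist_nonneg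
  have key := four_mul_sq_mul_sq_le (norm_nonneg y) h hx hc (dist_le_norm_add_norm x y)
  have hP : 0 < (1 - ‖x‖ ^ 2) * (1 - ‖y‖ ^ 2) := by
    have := norm_nonneg y
    have := norm_nonneg x
    apply mul_pos <;> nlinarith
  have hB : 1 + c / (1 - ‖x‖) = (1 - ‖x‖ + c) / (1 - ‖x‖) := by field_simp
  have hlog (B : ℝ) : 2 * Real.log B = Real.log (B ^ 2) := by rw [Real.log_pow]; norm_num
  rw [hB, hlog, Real.cosh_log (by positivity)]
  have hcosh : (((1 - ‖x‖ + c) / (1 - ‖x‖)) ^ 2 + (((1 - ‖x‖ + c) / (1 - ‖x‖)) ^ 2)⁻¹) / 2 =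
      1 + c ^ 2 * (2 * (1 - ‖x‖) + c) ^ 2 / (2 * (1 - ‖x‖) ^ 2 * (1 - ‖x‖ + c) ^ 2) := by
    field_simp
    ring
  rw [hcosh, add_le_add_iff_left, div_le_div_iff₀ hP (by positivity)]
  nlinarith [mul_le_mul_of_nonneg_left key (sq_nonneg c)]

end NormedSpace

noncomputable def invCayley (z : ℂ) : ℂ := I * (1 + z) / (1 - z)

theorem invCayley_im (z : ℂ) : (invCayley z).im = (1 - ‖z‖ ^ 2) / ‖1 - z‖ ^ 2 := by
  simp only [invCayley, Complex.div_im, Complex.sq_norm, Complex.normSq_apply, Complex.mul_im,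
    Complex.mul_re, Complex.I_re, Complex.I_im, Complex.add_re, Complex.add_im, Complex.sub_re,
    Complex.sub_im, Complex.one_re, Complex.one_im]
  ring

theorem invCayley_im_pos {z : ℂ} (hz : ‖z‖ < 1) : 0 < (invCayley z).im := by
  have h1 : z ≠ 1 := by rintro rfl; simp at hz
  rw [invCayley_im]
  exact div_pos (by nlinarith [norm_nonneg z]) (pow_pos (norm_pos_iff.2 (sub_ne_zero.2 h1.symm)) 2)

theorem dist_invCayley {x y : ℂ} (hx : x ≠ 1) (hy : y ≠ 1) :
    dist (invCayley x) (invCayley y) = 2 * dist x y / (‖1 - x‖ * ‖1 - y‖) := by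
  have hx' : 1 - x ≠ 0 := sub_ne_zero.2 hx.symm
  have hy' : 1 - y ≠ 0 := sub_ne_zero.2 hy.symm
  have hsub : invCayley x - invCayley y = 2 * I * (x - y) / ((1 - x) * (1 - y)) := by
    simp only [invCayley]
    field_simp
    ring
  rw [dist_eq_norm, hsub, dist_eq_norm]
  simp

theorem cosh_dist_invCayley {x y : ℂ} (hx : ‖x‖ < 1) (hy : ‖y‖ < 1) :
    Real.cosh (dist (UpperHalfPlane.mk _ (invCayley_im_pos hx))
        (UpperHalfPlane.mk _ (invCayley_im_pos hy))) =
      1 + 2 * dist x y ^ 2 / ((1 - ‖x‖ ^ 2) * (1 - ‖y‖ ^ 2)) := by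
  have hx1 : x ≠ 1 := by rintro rfl; simp at hx
  have hy1 : y ≠ 1 := by rintro rfl; simp at hy
  have hx' : ‖1 - x‖ ≠ 0 := norm_ne_zero_iff.2 (sub_ne_zero.2 hx1.symm)
  have hy' : ‖1 - y‖ ≠ 0 := norm_ne_zero_iff.2 (sub_ne_zero.2 hy1.symm)
  have hPx : 1 - ‖x‖ ^ 2 ≠ 0 := by nlinarith [norm_nonneg x]
  have hPy : 1 - ‖y‖ ^ 2 ≠ 0 := by nlinarith [norm_nonneg y]
  rw [UpperHalfPlane.cosh_dist]
  simp only [UpperHalfPlane.im, dist_invCayley hx1 hy1, invCayley_im]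
  field_simp

theorem jdist_invCayley_le {x y : ℂ} (hx : ‖x‖ < 1) (hy : ‖y‖ < 1) :
    jdist {z : ℂ | 0 < z.im} (invCayley x) (invCayley y) ≤ 2 * jdist (ball (0 : ℂ) 1) x y := by
  set z : ℍ := .mk _ (invCayley_im_pos hx)
  set w : ℍ := .mk _ (invCayley_im_pos hy)
  calc jdist _ (invCayley x) (invCayley y) = jdist _ (z : ℂ) w := rfl
    _ ≤ dist z w := z.jdist_le_dist w
    _ ≤ 2 * jdist (ball 0 1) x y := by
      refine (Real.cosh_strictMonoOn.le_iff_le dist_nonneg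
        (mul_nonneg zero_le_two (jdist_nonneg _ _ _))).1 ?_
      rw [cosh_dist_invCayley hx hy]
      exact one_add_two_mul_dist_sq_div_le_cosh_two_mul_jdist hx hy

theorem invCayley_ofReal (t : ℝ) : invCayley t = ((1 + t) / (1 - t) : ℝ) * I := by
  simp only [invCayley]
  push_cast
  ring

theorem jdist_upperHalfPlane_ofReal_mul_I {p q : ℝ} (hq : 0 < q) (hqp : q ≤ p) :
    jdist {z : ℂ | 0 < z.im} (p * I) (q * I) = Real.log (p / q) := by
  have hd : dist ((p : ℂ) * I) (q * I) = p - q := by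
    rw [dist_eq_norm, ← sub_mul, norm_mul, Complex.norm_I, mul_one, ← Complex.ofReal_sub,
      Complex.norm_real, Real.norm_of_nonneg (sub_nonneg.2 hqp)]
  rw [jdist_upperHalfPlane (by simpa using hq.trans_le hqp) (by simpa using hq)]
  simp only [Complex.mul_I_im, Complex.ofReal_re, hd, min_eq_right hqp]
  congr 1
  field_simp
  ring

theorem jdist_ball_ofReal_neg {t : ℝ} (ht0 : 0 ≤ t) (ht1 : t < 1) :
    jdist (ball (0 : ℂ) 1) t (-t) = Real.log ((1 + t) / (1 - t)) := by
  have hdt : dist (t : ℂ) 0 = t := by simp [ht0]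
  have hdnt : dist (-t : ℂ) 0 = t := by simp [ht0]
  have hd : dist (t : ℂ) (-t) = 2 * t := by
    rw [dist_eq_norm, sub_neg_eq_add, ← two_mul]
    simp [ht0]
  rw [jdist_ball (by simpa [abs_of_nonneg ht0] using ht1) (by simpa [abs_of_nonneg ht0] using ht1),
    hd, hdt, hdnt, min_self]
  congr 1
  field_simp [(sub_pos.2 ht1).ne']
  ring

theorem jdist_invCayley_neg {t : ℝ} (ht0 : 0 < t) (ht1 : t < 1) :
    jdist {z : ℂ | 0 < z.im} (invCayley t) (invCayley (-t)) =
      2 * jdist (ball (0 : ℂ) 1) t (-t) := by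
  have hneg : invCayley (-t) = (((1 + t) / (1 - t))⁻¹ : ℝ) * I := by
    rw [← Complex.ofReal_neg, invCayley_ofReal, inv_div, sub_neg_eq_add, ← sub_eq_add_neg]
  have hp : 1 < (1 + t) / (1 - t) := by rw [one_lt_div (by linarith)]; linarith
  rw [invCayley_ofReal, hneg, jdist_upperHalfPlane_ofReal_mul_I (by positivity)
      ((inv_le_one_of_one_le₀ hp.le).trans hp.le),
    jdist_ball_ofReal_neg ht0.le ht1, div_inv_eq_mul, ← sq, Real.log_pow]
  norm_num

/-- The Möbius transformation `f(z) = i(1+z)/(1-z)` of the unit disk onto the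
upper half plane satisfies `j_{ℍ²}(f x, f y) ≤ 2 j_𝔻(x, y)`, and the constant
`2` is best possible: for `x = t`, `y = -t`, `t ∈ (0,1)`, equality holds. -/
theorem inverse_cayley_jdist_sharp (f : ℂ → ℂ)
    (hf : ∀ z, f z = Complex.I * (1 + z) / (1 - z)) :
    (∀ x ∈ Metric.ball (0 : ℂ) 1, ∀ y ∈ Metric.ball (0 : ℂ) 1,
        jdist {z : ℂ | 0 < z.im} (f x) (f y) ≤ 2 * jdist (Metric.ball (0 : ℂ) 1) x y) ∧
      ∀ t : ℝ, 0 < t → t < 1 →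
        jdist {z : ℂ | 0 < z.im} (f (t : ℂ)) (f (-(t : ℂ))) =
          2 * jdist (Metric.ball (0 : ℂ) 1) (t : ℂ) (-(t : ℂ)) := by
  obtain rfl : f = invCayley := funext hf
  exact ⟨fun x hx y hy => jdist_invCayley_le (mem_ball_zero_iff.1 hx) (mem_ball_zero_iff.1 hy),
    fun t ht0 ht1 => jdist_invCayley_neg ht0 ht1⟩
end

section
/- Let a ∈ ℍ², let α ∈ ℝ, and let f(z) = e^{iα}(z − a)/(z − ā), which maps ℍ² \ {a} onto 𝔻 \ {0} with f(a) = 0. Then for all x, y ∈ ℍ² \ {a}: (1/2) · j_{ℍ²∖{a}}(x, y) ≤ j_{𝔻∖{0}}(f(x), f(y)) ≤ 2 · j_{ℍ²∖{a}}(x, y). -/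
/-!
With `t, t'` the distances of `x, y` and of `f x, f y`, and `m, m'` the corresponding minimal
boundary distances, `(1 + t / m) ^ 2 = 1 + (2 t m + t ^ 2) / m ^ 2` reduces both inequalities to
`t' m ^ 2 ≤ (2 t m + t ^ 2) m'` and its mirror image. Each boundary distance is bounded through a
relation `t' P Q ≤ r t C` with `C ≤ P + t + Q` and `P, Q ≥ m`. Against the puncture and against
`f ∞ = exp (α * I)` the relation is the invariance of the absolute cross ratio under `f`, with the
triangle inequality for `C`; against the unit circle it comes from
`2 (Im a) (Im z) ≤ (1 - ‖f z‖) ‖z - conj a‖ ^ 2`.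
-/

open Metric Filter Topology Set

open Complex (I exp)
open ComplexConjugate

theorem IsOpen.frontier_sdiff_singleton {X : Type*} [TopologicalSpace X] [T1Space X]
    {U : Set X} (hU : IsOpen U) {b : X} [NeBot (𝓝[≠] b)] (hb : b ∈ U) :
    frontier (U \ {b}) = frontier U ∪ {b} := by
  have hcl : closure (U \ {b}) = closure U :=
    (closure_mono sdiff_subset).antisymm <| closure_minimal
      ((dense_compl_singleton b).open_subset_closure_inter hU) isClosed_closure
  rw [(hU.sdiff isClosed_singleton).frontier_eq, hU.frontier_eq, hcl, sdiff_sdiff_right,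
    inter_eq_right.2 (singleton_subset_iff.2 (subset_closure hb))]

theorem IsOpen.infDist_frontier_pos {X : Type*} [PseudoMetricSpace X] {G : Set X}
    (hG : IsOpen G) {x : X} (hx : x ∈ G) (hne : (frontier G).Nonempty) :
    0 < infDist x (frontier G) :=
  (isClosed_frontier.notMem_iff_infDist_pos hne).1 fun h => h.2 (hG.interior_eq.symm ▸ hx)

theorem frontier_ball_sdiff_center {E : Type*} [NormedAddCommGroup E] [NormedSpace ℝ E]
    [Nontrivial E] (c : E) {r : ℝ} (hr : 0 < r) :
    frontier (ball c r \ {c}) = sphere c r ∪ {c} := by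
  rw [isOpen_ball.frontier_sdiff_singleton (mem_ball_self hr), frontier_ball c hr.ne']

theorem min_norm_le_infDist_sphere_union_zero {E : Type*} [SeminormedAddCommGroup E]
    (w : E) (r : ℝ) : min (r - ‖w‖) ‖w‖ ≤ infDist w (sphere 0 r ∪ {0}) := by
  refine (le_infDist (x := w) (s := sphere 0 r ∪ {0}) ⟨0, Or.inr rfl⟩).2 ?_
  rintro z (hz | rfl)
  · rw [mem_sphere_zero_iff_norm] at hz
    calc min (r - ‖w‖) ‖w‖ ≤ ‖z‖ - ‖w‖ := hz ▸ min_le_left _ _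
      _ ≤ dist w z := by rw [dist_comm, dist_eq_norm]; exact norm_sub_norm_le z w
  · exact (min_le_right _ _).trans_eq (dist_zero_right w).symm

theorem Complex.frontier_upperHalfPlane_sdiff {a : ℂ} (ha : 0 < a.im) :
    frontier ({z : ℂ | 0 < z.im} \ {a}) = {z : ℂ | z.im = 0} ∪ {a} := by
  rw [(isOpen_lt continuous_const Complex.continuous_im).frontier_sdiff_singleton ha,
    Complex.frontier_setOfPred_lt_im]

theorem Complex.infDist_im_eq_zero_union_le (x : ℂ) (s : Set ℂ) :
    infDist x ({z : ℂ | z.im = 0} ∪ s) ≤ |x.im| := by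
  have hre : (x.re : ℂ) ∈ {z : ℂ | z.im = 0} ∪ s := Or.inl (Complex.ofReal_im x.re)
  refine (infDist_le_dist_of_mem hre).trans_eq ?_
  rw [dist_eq_norm, show x - x.re = x.im * I by apply Complex.ext <;> simp, norm_mul,
    Complex.norm_I, mul_one, Complex.norm_real, Real.norm_eq_abs]

theorem Complex.norm_sub_conj_sq (a z : ℂ) :
    ‖z - conj a‖ ^ 2 = ‖z - a‖ ^ 2 + 4 * a.im * z.im := by
  simp only [Complex.sq_norm, Complex.normSq_apply, Complex.sub_re, Complex.sub_im,
    Complex.conj_re, Complex.conj_im]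
  ring

theorem Complex.sub_conj_ne_zero {a z : ℂ} (ha : 0 < a.im) (hz : 0 ≤ z.im) :
    z - conj a ≠ 0 := by
  intro h
  have := congrArg Complex.im h
  simp only [Complex.sub_im, Complex.conj_im, Complex.zero_im] at this
  linarith

theorem Complex.im_add_im_le_norm_sub_conj {a z : ℂ} (ha : 0 < a.im) (hz : 0 ≤ z.im) :
    z.im + a.im ≤ ‖z - conj a‖ := by
  have := Complex.abs_im_le_norm (z - conj a)
  rwa [Complex.sub_im, Complex.conj_im, sub_neg_eq_add, abs_of_pos (by linarith)] at this

theorem Complex.norm_sub_conj_self {a : ℂ} (ha : 0 < a.im) : ‖a - conj a‖ = 2 * a.im := by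
  rw [Complex.sub_conj, norm_mul, Complex.norm_real, Real.norm_eq_abs, Complex.norm_I,
    abs_of_pos (by linarith), mul_one]

theorem mul_sq_le_of_mul_le_mul {t t' r m P Q C : ℝ} (hm : 0 < m) (hP : m ≤ P) (hQ : m ≤ Q)
    (ht : 0 ≤ t) (hr : 0 ≤ r) (h : t' * (P * Q) ≤ r * (t * C)) (hC : C ≤ P + t + Q) :
    t' * m ^ 2 ≤ (2 * t * m + t ^ 2) * r := by
  have hP0 : 0 < P := hm.trans_le hP
  have hQ0 : 0 < Q := hm.trans_le hQ
  have hCm : t * C * m ^ 2 ≤ (2 * t * m + t ^ 2) * (P * Q) := by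
    have hmP : m * m ≤ P * Q := mul_le_mul hP hQ hm.le hP0.le
    calc t * C * m ^ 2 ≤ t * (P + t + Q) * m ^ 2 := by gcongr
      _ = t * m * (P * m) + t ^ 2 * (m * m) + t * m * (m * Q) := by ring
      _ ≤ t * m * (P * Q) + t ^ 2 * (P * Q) + t * m * (P * Q) := by gcongr
      _ = (2 * t * m + t ^ 2) * (P * Q) := by ring
  refine le_of_mul_le_mul_right ?_ (mul_pos hP0 hQ0)
  calc t' * m ^ 2 * (P * Q) = t' * (P * Q) * m ^ 2 := by ring
    _ ≤ r * (t * C) * m ^ 2 := by gcongr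
    _ = r * (t * C * m ^ 2) := by ring
    _ ≤ r * ((2 * t * m + t ^ 2) * (P * Q)) := by gcongr
    _ = (2 * t * m + t ^ 2) * r * (P * Q) := by ring

theorem log_one_add_div_le_two_mul_log {t t' m m' : ℝ} (hm : 0 < m) (hm' : 0 < m')
    (ht' : 0 ≤ t') (h : t' * m ^ 2 ≤ (2 * t * m + t ^ 2) * m') :
    Real.log (1 + t' / m') ≤ 2 * Real.log (1 + t / m) := by
  have hsq : (1 + t / m) ^ 2 = 1 + (2 * t * m + t ^ 2) / m ^ 2 := by field_simp; ring
  have hdiv : t' / m' ≤ (2 * t * m + t ^ 2) / m ^ 2 := by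
    rw [div_le_div_iff₀ hm' (by positivity)]; linarith
  rw [← Nat.cast_ofNat, ← Real.log_pow, hsq]
  exact Real.log_le_log (by positivity) (by linarith)

section Mobius

variable {a : ℂ} (ha : 0 < a.im) {α : ℝ} {f : ℂ → ℂ}
  (hf : ∀ z, f z = exp (α * I) * (z - a) / (z - conj a))

include hf

theorem mobius_sub_mobius_mul {z w : ℂ} (hz : z - conj a ≠ 0) (hw : w - conj a ≠ 0) :
    (f z - f w) * ((z - conj a) * (w - conj a)) = exp (α * I) * (a - conj a) * (z - w) := by
  rw [hf, hf]; field_simp; ring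

theorem norm_mobius_mul {z : ℂ} (hz : z - conj a ≠ 0) : ‖f z‖ * ‖z - conj a‖ = ‖z - a‖ := by
  rw [hf, norm_div, norm_mul, Complex.norm_exp_ofReal_mul_I, one_mul, div_mul_cancel₀]
  exact norm_ne_zero_iff.2 hz

/-- Invariance of the absolute cross ratio `[x, y, ζ, ∞]`, the point at infinity being sent
to `exp (α * I)`. -/
theorem dist_mul_dist_mobius_eq {x y ζ : ℂ} (hx : x - conj a ≠ 0) (hy : y - conj a ≠ 0)
    (hζ : ζ - conj a ≠ 0) :
    dist x y * (dist (f x) (f ζ) * dist (f y) (exp (α * I))) =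
      dist (f x) (f y) * (dist x ζ * dist (f ζ) (exp (α * I))) := by
  have key : (x - y) * ((f x - f ζ) * (f y - exp (α * I))) =
      (f x - f y) * ((x - ζ) * (f ζ - exp (α * I))) := by
    rw [hf, hf, hf]; field_simp; ring
  simpa only [dist_eq_norm, norm_mul] using congrArg norm key

include ha

theorem dist_mobius_mul {z w : ℂ} (hz : 0 ≤ z.im) (hw : 0 ≤ w.im) :
    dist (f z) (f w) * (‖z - conj a‖ * ‖w - conj a‖) = 2 * a.im * dist z w := by
  have := congrArg norm (mobius_sub_mobius_mul hf (Complex.sub_conj_ne_zero ha hz)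
    (Complex.sub_conj_ne_zero ha hw))
  simpa only [dist_eq_norm, norm_mul, Complex.norm_exp_ofReal_mul_I, one_mul,
    Complex.norm_sub_conj_self ha] using this

theorem two_mul_im_mul_le_one_sub_norm_mobius {z : ℂ} (hz : 0 ≤ z.im) :
    2 * a.im * z.im ≤ (1 - ‖f z‖) * ‖z - conj a‖ ^ 2 := by
  have hn := norm_mobius_mul hf (Complex.sub_conj_ne_zero ha hz)
  have hsq := Complex.norm_sub_conj_sq a z
  have hexp : (1 - ‖f z‖) * ‖z - conj a‖ ^ 2 = ‖z - conj a‖ ^ 2 - ‖z - a‖ * ‖z - conj a‖ := by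
    rw [← hn]; ring
  nlinarith [sq_nonneg (‖z - conj a‖ - ‖z - a‖)]

theorem mapsTo_mobius_punctured :
    MapsTo f ({z : ℂ | 0 < z.im} \ {a}) (ball 0 1 \ {0}) := by
  rintro z ⟨hz : 0 < z.im, hza : z ≠ a⟩
  have hA : 0 < ‖z - conj a‖ := norm_pos_iff.2 (Complex.sub_conj_ne_zero ha hz.le)
  have hp : 0 < ‖z - a‖ := norm_pos_iff.2 (sub_ne_zero.2 hza)
  have hn := norm_mobius_mul hf (Complex.sub_conj_ne_zero ha hz.le)
  have hsq := Complex.norm_sub_conj_sq a z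
  refine ⟨mem_ball_zero_iff.2 ?_, fun h => ?_⟩
  · have hpA : ‖z - a‖ < ‖z - conj a‖ := by nlinarith [mul_pos ha hz]
    rw [← hn] at hpA
    exact lt_of_mul_lt_mul_right (hpA.trans_eq (one_mul _).symm) hA.le
  · rw [mem_singleton_iff.1 h, norm_zero, zero_mul] at hn
    exact hp.ne hn

theorem mapsTo_mobius_boundary :
    MapsTo f ({z : ℂ | z.im = 0} ∪ {a}) (sphere 0 1 ∪ {0}) := by
  rintro z (hz | rfl)
  · have hz : z.im = 0 := hz
    have hA : 0 < ‖z - conj a‖ := norm_pos_iff.2 (Complex.sub_conj_ne_zero ha hz.ge)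
    have hAp : ‖z - conj a‖ = ‖z - a‖ := by
      have := Complex.norm_sub_conj_sq a z
      rw [hz, mul_zero, add_zero] at this
      exact (pow_left_inj₀ (norm_nonneg _) (norm_nonneg _) two_ne_zero).1 this
    have hn := norm_mobius_mul hf (Complex.sub_conj_ne_zero ha hz.ge)
    rw [hAp] at hn hA
    exact Or.inl (mem_sphere_zero_iff_norm.2 ((mul_eq_right₀ hA.ne').1 hn))
  · exact Or.inr (by rw [hf]; simp)

theorem dist_mobius_mul_sq_le_infDist {x y : ℂ} (hx : 0 < x.im) (hy : 0 < y.im) {m : ℝ}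
    (hm : 0 < m) (hmx : m ≤ infDist x ({z : ℂ | z.im = 0} ∪ {a}))
    (hmy : m ≤ infDist y ({z : ℂ | z.im = 0} ∪ {a})) :
    dist (f x) (f y) * m ^ 2 ≤
      (2 * dist x y * m + dist x y ^ 2) * infDist (f x) (sphere 0 1 ∪ {0}) := by
  have hA : 0 < ‖x - conj a‖ := norm_pos_iff.2 (Complex.sub_conj_ne_zero ha hx.le)
  have hm_im : m ≤ x.im :=
    hmx.trans ((Complex.infDist_im_eq_zero_union_le x {a}).trans_eq (abs_of_pos hx))
  have hm_dist : m ≤ dist x a := hmx.trans (infDist_le_dist_of_mem (Or.inr rfl))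
  have hmB : m ≤ ‖y - conj a‖ := by
    linarith [hmy.trans ((Complex.infDist_im_eq_zero_union_le y {a}).trans_eq (abs_of_pos hy)),
      Complex.im_add_im_le_norm_sub_conj ha hy.le]
  have hdist := dist_mobius_mul ha hf hx.le hy.le
  have hnorm := norm_mobius_mul hf (Complex.sub_conj_ne_zero ha hx.le)
  have hcircle := two_mul_im_mul_le_one_sub_norm_mobius ha hf hx.le
  have htriangle : ‖x - conj a‖ ≤ dist x y + ‖y - conj a‖ := by
    simpa only [dist_eq_norm] using dist_triangle x y (conj a)
  set A := ‖x - conj a‖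
  set B := ‖y - conj a‖
  have hr : 0 ≤ 1 - ‖f x‖ := by
    by_contra! h
    nlinarith [mul_pos ha hx, mul_nonpos_of_nonpos_of_nonneg h.le (sq_nonneg A)]
  refine (mul_le_mul_of_nonneg_left (min_norm_le_infDist_sphere_union_zero _ _)
    (by positivity)).trans' ?_
  rw [mul_min_of_nonneg _ _ (by positivity)]
  refine le_min ?_ ?_
  · refine mul_sq_le_of_mul_le_mul (C := A) hm hm_im hmB dist_nonneg hr ?_ ?_
    · refine le_of_mul_le_mul_right ?_ hA
      calc dist (f x) (f y) * (x.im * B) * A = dist x y * (2 * a.im * x.im) := by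
            linear_combination x.im * hdist
        _ ≤ dist x y * ((1 - ‖f x‖) * A ^ 2) := by gcongr
        _ = (1 - ‖f x‖) * (dist x y * A) * A := by ring
    · linarith
  · refine mul_sq_le_of_mul_le_mul (C := 2 * a.im) hm hm_dist hmB dist_nonneg (norm_nonneg _)
      (le_of_eq ?_) ?_
    · rw [dist_eq_norm x a, ← hnorm]
      linear_combination ‖f x‖ * hdist
    · have := dist_triangle4 a x y (conj a)
      rw [dist_eq_norm a, Complex.norm_sub_conj_self ha, dist_comm a, dist_eq_norm y] at this
      exact this

theorem dist_mul_sq_le_infDist {x y : ℂ} (hx : 0 < x.im) (hy : 0 < y.im) {m : ℝ}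
    (hm : 0 < m) (hmx : m ≤ infDist (f x) (sphere 0 1 ∪ {0}))
    (hmy : m ≤ infDist (f y) (sphere 0 1 ∪ {0})) :
    dist x y * m ^ 2 ≤
      (2 * dist (f x) (f y) * m + dist (f x) (f y) ^ 2) *
        infDist x ({z : ℂ | z.im = 0} ∪ {a}) := by
  have hS : IsClosed ({z : ℂ | z.im = 0} ∪ {a}) :=
    (isClosed_eq Complex.continuous_im continuous_const).union isClosed_singleton
  obtain ⟨ζ, hζ, hxζ⟩ := hS.exists_infDist_eq_dist ⟨a, Or.inr rfl⟩ x
  have hζim : 0 ≤ ζ.im := by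
    rcases hζ with hζ | hζ
    exacts [hζ.ge, (mem_singleton_iff.1 hζ).symm ▸ ha.le]
  have hE : exp (α * I) ∈ sphere (0 : ℂ) 1 ∪ {0} := Or.inl (by simp)
  rw [hxζ]
  refine mul_sq_le_of_mul_le_mul (C := dist (f ζ) (exp (α * I))) hm
    (hmx.trans (infDist_le_dist_of_mem (mapsTo_mobius_boundary ha hf hζ)))
    (hmy.trans (infDist_le_dist_of_mem hE)) dist_nonneg dist_nonneg ?_ ?_
  · rw [dist_mul_dist_mobius_eq hf (Complex.sub_conj_ne_zero ha hx.le)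
      (Complex.sub_conj_ne_zero ha hy.le) (Complex.sub_conj_ne_zero ha hζim), mul_left_comm]
  · rw [dist_comm (f x)]
    exact dist_triangle4 _ _ _ _

end Mobius

/-- Any Möbius transformation `f(z) = e^{iα}(z-a)/(z-ā)` of `ℍ² \ {a}` onto
`𝔻 \ {0}` with `f(a) = 0` is `2`-bilipschitz with respect to the distance
ratio metrics of the punctured domains. -/
theorem mobius_punctured_halfplane_to_disk_jdist_bilipschitz
    (a : ℂ) (ha : 0 < a.im) (α : ℝ) (f : ℂ → ℂ)
    (hf : ∀ z, f z = Complex.exp (α * Complex.I) * (z - a) / (z - (starRingEnd ℂ) a)) :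
    ∀ x ∈ {z : ℂ | 0 < z.im} \ {a}, ∀ y ∈ {z : ℂ | 0 < z.im} \ {a},
      (1 / 2) * jdist ({z : ℂ | 0 < z.im} \ {a}) x y ≤
          jdist (Metric.ball (0 : ℂ) 1 \ {0}) (f x) (f y) ∧
        jdist (Metric.ball (0 : ℂ) 1 \ {0}) (f x) (f y) ≤
          2 * jdist ({z : ℂ | 0 < z.im} \ {a}) x y := by
  intro x hx y hy
  have hH : IsOpen ({z : ℂ | 0 < z.im} \ {a}) :=
    (isOpen_lt continuous_const Complex.continuous_im).sdiff isClosed_singleton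
  have hD : IsOpen (ball (0 : ℂ) 1 \ {0}) := isOpen_ball.sdiff isClosed_singleton
  have hH_frontier := Complex.frontier_upperHalfPlane_sdiff ha
  have hD_frontier := frontier_ball_sdiff_center (0 : ℂ) one_pos
  have hHne : (frontier ({z : ℂ | 0 < z.im} \ {a})).Nonempty := ⟨a, hH_frontier ▸ Or.inr rfl⟩
  have hDne : (frontier (ball (0 : ℂ) 1 \ {0})).Nonempty := ⟨0, hD_frontier ▸ Or.inr rfl⟩
  have hm := lt_min (hH.infDist_frontier_pos hx hHne) (hH.infDist_frontier_pos hy hHne)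
  have hm' := lt_min (hD.infDist_frontier_pos (mapsTo_mobius_punctured ha hf hx) hDne)
    (hD.infDist_frontier_pos (mapsTo_mobius_punctured ha hf hy) hDne)
  simp only [jdist, hH_frontier, hD_frontier] at hm hm' ⊢
  replace hx : 0 < x.im := hx.1
  replace hy : 0 < y.im := hy.1
  constructor
  · have key := le_min
      (dist_mul_sq_le_infDist ha hf hx hy hm' (min_le_left _ _) (min_le_right _ _))
      (by simpa only [dist_comm] using
        dist_mul_sq_le_infDist ha hf hy hx hm' (min_le_right _ _) (min_le_left _ _))
    rw [← mul_min_of_nonneg _ _ (by positivity)] at key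
    linarith [log_one_add_div_le_two_mul_log hm' hm dist_nonneg key]
  · have key := le_min
      (dist_mobius_mul_sq_le_infDist ha hf hx hy hm (min_le_left _ _) (min_le_right _ _))
      (by simpa only [dist_comm] using
        dist_mobius_mul_sq_le_infDist ha hf hy hx hm (min_le_right _ _) (min_le_left _ _))
    rw [← mul_min_of_nonneg _ _ (by positivity)] at key
    exact log_one_add_div_le_two_mul_log hm hm' dist_nonneg key
end

section
/- Let k ∈ (1, ∞). Then the function f₁(θ) = (k sin θ)/(1 − sin θ) − (sin kθ)/(1 − sin kθ) is strictly decreasing on the interval (0, π/(2k)), with f₁(θ) → 0 as θ → 0⁺ and f₁(θ) → −∞ as θ → (π/(2k))⁻; in particular f₁(θ) < 0 for all θ ∈ (0, π/(2k)). -/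
open Real Filter Topology Set

/-!
With `g x = sin x / (1 - sin x)` we have `f₁ θ = k * g θ - g (k * θ)`, whose derivative is
`k * (g' θ - g' (k * θ))`. Since `g' x ^ 2 = (1 + sin x) / (1 - sin x) ^ 3` grows with `sin x`,
`g'` is strictly increasing on `(-π/2, π/2)`, so `f₁' < 0` as `θ < k θ`. As `g 0 = 0`, `f₁ → 0`
at `0⁺`, which with monotonicity forces `f₁ < 0`; and `g (k θ) → ∞` as `k θ → π/2⁻`.
-/

theorem sin_mem_Ioo_of_mem_Ioo {x : ℝ} (hx : x ∈ Ioo (-(π / 2)) (π / 2)) :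
    sin x ∈ Ioo (-1) 1 := by
  constructor
  · simpa using sin_lt_sin_of_lt_of_le_pi_div_two le_rfl hx.2.le hx.1
  · simpa using sin_lt_sin_of_lt_of_le_pi_div_two hx.1.le le_rfl hx.2

theorem hasDerivAt_sin_div_one_sub_sin {x : ℝ} (hx : sin x ≠ 1) :
    HasDerivAt (fun x => sin x / (1 - sin x)) (cos x / (1 - sin x) ^ 2) x := by
  have hne : 1 - sin x ≠ 0 := sub_ne_zero.mpr hx.symm
  exact ((hasDerivAt_sin x).div ((hasDerivAt_sin x).const_sub 1) hne).congr_deriv (by ring)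

theorem sq_cos_div_one_sub_sin_sq {x : ℝ} (hx : sin x ≠ 1) :
    (cos x / (1 - sin x) ^ 2) ^ 2 = (1 + sin x) / (1 - sin x) ^ 3 := by
  have hne : 1 - sin x ≠ 0 := sub_ne_zero.mpr hx.symm
  rw [div_pow, cos_sq']
  field_simp
  ring

theorem one_add_div_one_sub_pow_three_lt {s t : ℝ} (hs : -1 < s) (hst : s < t) (ht : t < 1) :
    (1 + s) / (1 - s) ^ 3 < (1 + t) / (1 - t) ^ 3 := by
  rw [div_lt_div_iff₀ (pow_pos (by linarith) 3) (pow_pos (by linarith) 3)]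
  exact mul_lt_mul'' (by linarith) (pow_lt_pow_left₀ (by linarith) (by linarith) three_ne_zero)
    (by linarith) (pow_pos (by linarith) 3).le

theorem strictMonoOn_cos_div_one_sub_sin_sq :
    StrictMonoOn (fun x => cos x / (1 - sin x) ^ 2) (Ioo (-(π / 2)) (π / 2)) := by
  intro a ha b hb hab
  obtain ⟨hsa, hsa'⟩ := sin_mem_Ioo_of_mem_Ioo ha
  obtain ⟨hsb, hsb'⟩ := sin_mem_Ioo_of_mem_Ioo hb
  have hsab : sin a < sin b :=
    sin_lt_sin_of_lt_of_le_pi_div_two ha.1.le hb.2.le hab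
  have hca := cos_pos_of_mem_Ioo ha
  have hcb := cos_pos_of_mem_Ioo hb
  refine (pow_lt_pow_iff_left₀ (by positivity) (by positivity) two_ne_zero).mp ?_
  rw [sq_cos_div_one_sub_sin_sq hsa'.ne, sq_cos_div_one_sub_sin_sq hsb'.ne]
  exact one_add_div_one_sub_pow_three_lt hsa hsab hsb'

theorem tendsto_sin_div_one_sub_sin_atTop :
    Tendsto (fun x => sin x / (1 - sin x)) (𝓝[<] (π / 2)) atTop := by
  have hsin : Tendsto sin (𝓝[<] (π / 2)) (𝓝 1) := by
    simpa using continuous_sin.continuousWithinAt.tendsto (x := π / 2) (s := Iio (π / 2))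
  have hgap : Tendsto (fun x => 1 - sin x) (𝓝[<] (π / 2)) (𝓝[>] 0) := by
    refine tendsto_nhdsWithin_of_tendsto_nhds_of_eventually_within _
      (by simpa using hsin.const_sub 1) ?_
    filter_upwards [Ioo_mem_nhdsLT (neg_lt_self (half_pos pi_pos))] with x hx
    simpa using (sin_mem_Ioo_of_mem_Ioo hx).2
  exact (hsin.pos_mul_atTop one_pos (tendsto_inv_nhdsGT_zero.comp hgap)).congr fun x => rfl


theorem StrictAntiOn.lt_of_tendsto_nhdsGT {α β : Type*} [LinearOrder α] [TopologicalSpace α]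
    [OrderTopology α] [DenselyOrdered α] [NoMaxOrder α] [LinearOrder β] [TopologicalSpace β]
    [OrderClosedTopology β] {f : α → β} {a b : α} {L : β} (hf : StrictAntiOn f (Ioo a b))
    (hlim : Tendsto f (𝓝[>] a) (𝓝 L)) {x : α} (hx : x ∈ Ioo a b) : f x < L := by
  obtain ⟨y, hay, hyx⟩ := exists_between hx.1
  have hy : y ∈ Ioo a b := ⟨hay, hyx.trans hx.2⟩
  calc f x < f y := hf hy hx hyx
    _ ≤ L := ge_of_tendsto hlim <| by
      filter_upwards [Ioo_mem_nhdsGT hay] with z hz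
      exact (hf ⟨hz.1, hz.2.trans hy.2⟩ hy hz.2).le

section

variable {g g' : ℝ → ℝ} {k a : ℝ}

theorem strictAntiOn_mul_sub_comp_mul (hk : 1 < k)
    (hg : ∀ x ∈ Ioo 0 a, HasDerivAt g (g' x) x) (hg' : StrictMonoOn g' (Ioo 0 a)) :
    StrictAntiOn (fun θ => k * g θ - g (k * θ)) (Ioo 0 (a / k)) := by
  have hk0 : 0 < k := one_pos.trans hk
  have hmem : ∀ θ ∈ Ioo 0 (a / k), θ ∈ Ioo 0 a ∧ k * θ ∈ Ioo 0 a ∧ θ < k * θ := by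
    intro θ ⟨hθ, hθa⟩
    have hkθ : k * θ < a := (lt_div_iff₀' hk0).mp hθa
    have hθkθ : θ < k * θ := lt_mul_left hθ hk
    exact ⟨⟨hθ, hθkθ.trans hkθ⟩, ⟨by positivity, hkθ⟩, hθkθ⟩
  have hderiv : ∀ θ ∈ Ioo 0 (a / k),
      HasDerivAt (fun θ => k * g θ - g (k * θ)) (k * (g' θ - g' (k * θ))) θ := by
    intro θ hθ
    obtain ⟨hθa, hkθa, -⟩ := hmem θ hθ
    exact (((hg θ hθa).const_mul k).sub
      ((hg (k * θ) hkθa).comp θ ((hasDerivAt_id θ).const_mul k))).congr_deriv (by ring)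
  refine strictAntiOn_of_hasDerivWithinAt_neg (f' := fun θ => k * (g' θ - g' (k * θ)))
    (convex_Ioo 0 (a / k))
    (fun θ hθ => (hderiv θ hθ).continuousAt.continuousWithinAt) (fun θ hθ => ?_) fun θ hθ => ?_
  · rw [interior_Ioo] at hθ
    exact (hderiv θ hθ).hasDerivWithinAt
  · rw [interior_Ioo] at hθ
    obtain ⟨hθa, hkθa, hθkθ⟩ := hmem θ hθ
    exact mul_neg_of_pos_of_neg hk0 (sub_neg.mpr (hg' hθa hkθa hθkθ))

theorem tendsto_mul_sub_comp_mul_atBot (hk : 0 < k) (hc : ContinuousAt g (a / k))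
    (hg : Tendsto g (𝓝[<] a) atTop) :
    Tendsto (fun θ => k * g θ - g (k * θ)) (𝓝[<] (a / k)) atBot := by
  have hmul : Tendsto (k * ·) (𝓝[<] (a / k)) (𝓝[<] a) := by
    refine tendsto_nhdsWithin_of_tendsto_nhds_of_eventually_within _ ?_ ?_
    · simpa [mul_div_cancel₀ a hk.ne'] using
        ((continuous_const_mul k).tendsto (a / k)).mono_left nhdsWithin_le_nhds
    · filter_upwards [self_mem_nhdsWithin] with θ hθ
      exact (lt_div_iff₀' hk).mp hθ
  simpa only [sub_eq_add_neg, Function.comp_apply] using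
    ((hc.tendsto.mono_left nhdsWithin_le_nhds).const_mul k).add_atBot
      (tendsto_neg_atTop_atBot.comp (hg.comp hmul))

theorem tendsto_mul_sub_comp_mul_nhdsGT_zero (hg : ContinuousAt g 0) (hg0 : g 0 = 0) :
    Tendsto (fun θ => k * g θ - g (k * θ)) (𝓝[>] 0) (𝓝 0) := by
  have hcont : ContinuousAt (fun θ => k * g θ - g (k * θ)) 0 :=
    (continuousAt_const.mul hg).sub
      (hg.comp_of_eq (continuous_const_mul k).continuousAt (mul_zero k))
  simpa [hg0] using hcont.tendsto.mono_left nhdsWithin_le_nhds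

end

/-- For `k > 1`, the function `f₁(θ) = k sin θ/(1 - sin θ) - sin kθ/(1 - sin kθ)`
is strictly decreasing on `(0, π/(2k))`, tends to `0` as `θ → 0⁺` and to `-∞`
as `θ → (π/(2k))⁻`; in particular it is negative on `(0, π/(2k))`. -/
theorem f1_strictAnti_neg (k : ℝ) (hk : 1 < k) :
    StrictAntiOn (fun θ : ℝ =>
        k * Real.sin θ / (1 - Real.sin θ) - Real.sin (k * θ) / (1 - Real.sin (k * θ)))
      (Set.Ioo 0 (π / (2 * k))) ∧
    Tendsto (fun θ : ℝ =>
        k * Real.sin θ / (1 - Real.sin θ) - Real.sin (k * θ) / (1 - Real.sin (k * θ)))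
      (𝓝[>] 0) (𝓝 0) ∧
    Tendsto (fun θ : ℝ =>
        k * Real.sin θ / (1 - Real.sin θ) - Real.sin (k * θ) / (1 - Real.sin (k * θ)))
      (𝓝[<] (π / (2 * k))) atBot ∧
    ∀ θ ∈ Set.Ioo 0 (π / (2 * k)),
      k * Real.sin θ / (1 - Real.sin θ) - Real.sin (k * θ) / (1 - Real.sin (k * θ)) < 0 := by
  have hsub : Ioo 0 (π / 2) ⊆ Ioo (-(π / 2)) (π / 2) := Ioo_subset_Ioo_left (by linarith [pi_pos])
  have hderiv : ∀ x ∈ Ioo 0 (π / 2),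
      HasDerivAt (fun x => sin x / (1 - sin x)) (cos x / (1 - sin x) ^ 2) x :=
    fun x hx => hasDerivAt_sin_div_one_sub_sin (sin_mem_Ioo_of_mem_Ioo (hsub hx)).2.ne
  have hc : π / 2 / k ∈ Ioo 0 (π / 2) :=
    ⟨by positivity, div_lt_self (half_pos pi_pos) hk⟩
  -- rewrite the statement in the shape `k * g θ - g (k * θ)` on `Ioo 0 (π / 2 / k)`
  simp only [mul_div_assoc]
  rw [← div_div]
  have hanti := strictAntiOn_mul_sub_comp_mul hk hderiv
    (strictMonoOn_cos_div_one_sub_sin_sq.mono hsub)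
  have hzero := tendsto_mul_sub_comp_mul_nhdsGT_zero (k := k)
    (hasDerivAt_sin_div_one_sub_sin (by simp)).continuousAt (by simp)
  exact ⟨hanti, hzero, tendsto_mul_sub_comp_mul_atBot (one_pos.trans hk)
    (hderiv _ hc).continuousAt tendsto_sin_div_one_sub_sin_atTop,
    fun θ hθ => hanti.lt_of_tendsto_nhdsGT hzero hθ⟩
end

section
/- Let k ∈ (1, ∞) and θ ∈ (0, π/(2k)). Then the function f₂(r) = (1 − (1 − sin θ)·r) / (1 − (1 − sin kθ)·r^k) is strictly decreasing on (0, 1), with f₂(r) → 1 as r → 0⁺ and f₂(r) → sin θ / sin kθ as r → 1⁻. -/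
open Real Filter Topology Set

/-! With `a = 1 - sin θ` and `b = 1 - sin kθ`, the numerator of `f₂'(r)` is
`-a + a b r^k + b k r^(k-1) - a b k r^k`. Weighted AM-GM gives `k r^(k-1) ≤ (k-1) r^k + 1`, and
with `r^k < 1` this bounds the numerator strictly by `k (1 - a) b - a (1 - b)`. That is `≤ 0`
because `t ↦ t / sin t - t` decreases on `(0, π/2]`: compare its values at `θ` and `kθ`.
The limits are the values at `0` and `1` of the continuous extension of `f₂`. -/

lemma Real.one_sub_sin_le_cos {t : ℝ} (h₀ : 0 ≤ t) (h₁ : t ≤ π / 2) : 1 - sin t ≤ cos t := by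
  have hs : 0 ≤ sin t := sin_nonneg_of_nonneg_of_le_pi h₀ (by linarith [pi_pos])
  have hc : 0 ≤ cos t := cos_nonneg_of_mem_Icc ⟨by linarith, h₁⟩
  nlinarith [sin_sq_add_cos_sq t, sin_le_one t, cos_le_one t]

lemma Real.antitoneOn_div_sin_sub_self :
    AntitoneOn (fun t : ℝ => t / sin t - t) (Ioc 0 (π / 2)) := by
  have hsin : ∀ t ∈ Ioc (0 : ℝ) (π / 2), 0 < sin t := fun t ht =>
    sin_pos_of_pos_of_lt_pi ht.1 (by linarith [ht.2, pi_pos])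
  refine antitoneOn_of_hasDerivWithinAt_nonpos (convex_Ioc _ _)
    ((continuousOn_id.div continuousOn_sin fun t ht => (hsin t ht).ne').sub continuousOn_id)
    (f' := fun t => (1 * sin t - t * cos t) / sin t ^ 2 - 1) (fun t ht => ?_) fun t ht => ?_
    <;> rw [interior_Ioc] at ht
  · exact (((hasDerivAt_id t).div (hasDerivAt_sin t) (hsin t (Ioo_subset_Ioc_self ht)).ne').sub
      (hasDerivAt_id t)).hasDerivWithinAt
  · have hs := hsin t (Ioo_subset_Ioc_self ht)
    have hc : 0 ≤ cos t := cos_nonneg_of_mem_Icc ⟨by linarith [ht.1, pi_pos], ht.2.le⟩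
    -- `sin t (1 - sin t) ≤ sin t cos t ≤ t cos t`
    have hnum : 1 * sin t - t * cos t ≤ sin t ^ 2 := by
      nlinarith [mul_le_mul_of_nonneg_left (one_sub_sin_le_cos ht.1.le ht.2.le) hs.le,
        mul_le_mul_of_nonneg_right (sin_lt ht.1).le hc]
    rw [sub_nonpos]
    exact div_le_one_of_le₀ hnum (by positivity)

lemma Real.mul_sin_mul_one_sub_sin_le {k θ : ℝ} (hk : 1 ≤ k) (hθ : 0 < θ) (hkθ : k * θ ≤ π / 2) :
    k * sin θ * (1 - sin (k * θ)) ≤ (1 - sin θ) * sin (k * θ) := by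
  have hθk : θ ≤ k * θ := le_mul_of_one_le_left hθ.le hk
  have hs : 0 < sin θ := sin_pos_of_pos_of_lt_pi hθ (by linarith [pi_pos])
  have hS : 0 < sin (k * θ) := sin_pos_of_pos_of_lt_pi (by linarith) (by linarith [pi_pos])
  have h := antitoneOn_div_sin_sub_self ⟨hθ, hθk.trans hkθ⟩ ⟨hθ.trans_le hθk, hkθ⟩ hθk
  simp only at h
  rw [div_sub' hS.ne', div_sub' hs.ne', div_le_div_iff₀ hS hs] at h
  exact le_of_mul_le_mul_left (by linear_combination h) hθ

lemma Real.mul_rpow_sub_one_le {k r : ℝ} (hk : 1 ≤ k) (hr : 0 ≤ r) :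
    k * r ^ (k - 1) ≤ (k - 1) * r ^ k + 1 := by
  have hk₀ : 0 < k := by linarith
  -- weighted AM-GM for `r ^ k` and `1` with weights `(k - 1) / k` and `1 / k`
  have h := geom_mean_le_arith_mean2_weighted (w₁ := (k - 1) / k) (w₂ := 1 / k)
    (p₁ := r ^ k) (p₂ := 1) (div_nonneg (sub_nonneg.2 hk) hk₀.le) (by positivity)
    (by positivity) zero_le_one (by field_simp; ring)
  rw [one_rpow, mul_one, mul_one, ← rpow_mul hr, mul_div_cancel₀ _ hk₀.ne'] at h
  calc k * r ^ (k - 1) ≤ k * ((k - 1) / k * r ^ k + 1 / k) := by gcongr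
    _ = (k - 1) * r ^ k + 1 := by field_simp

lemma strictAntiOn_one_sub_mul_div_one_sub_mul_rpow {a b k : ℝ} (hk : 1 < k) (ha : a < 1)
    (hb₀ : 0 < b) (hb₁ : b ≤ 1) (hab : k * (1 - a) * b ≤ a * (1 - b)) :
    StrictAntiOn (fun r : ℝ => (1 - a * r) / (1 - b * r ^ k)) (Ioo 0 1) := by
  have hden : ∀ r ∈ Ioo (0 : ℝ) 1, 0 < 1 - b * r ^ k := fun r hr => by
    nlinarith [rpow_lt_one hr.1.le hr.2 (by linarith : 0 < k), rpow_pos_of_pos hr.1 k]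
  have hderiv : ∀ r ∈ Ioo (0 : ℝ) 1, HasDerivAt (fun r : ℝ => (1 - a * r) / (1 - b * r ^ k))
      ((-a * (1 - b * r ^ k) - (1 - a * r) * -(b * (k * r ^ (k - 1)))) /
        (1 - b * r ^ k) ^ 2) r := fun r hr =>
    (((hasDerivAt_id r).const_mul a).const_sub (1 : ℝ) |>.congr_deriv (by simp)).div
      (((hasDerivAt_rpow_const (Or.inl hr.1.ne')).const_mul b).const_sub 1) (hden r hr).ne'
  refine strictAntiOn_of_hasDerivWithinAt_neg (convex_Ioo 0 1)
    (fun r hr => (hderiv r hr).continuousAt.continuousWithinAt)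
    (fun r hr => (hderiv r (by rwa [interior_Ioo] at hr)).hasDerivWithinAt) fun r hr => ?_
  rw [interior_Ioo] at hr
  obtain ⟨hr₀, hr₁⟩ := hr
  refine div_neg_of_neg_of_pos ?_ (pow_pos (hden r ⟨hr₀, hr₁⟩) 2)
  have hmul : r ^ (k - 1) * r = r ^ k := by rw [← rpow_add_one hr₀.ne']; ring_nf
  have hAM := mul_le_mul_of_nonneg_left (mul_rpow_sub_one_le hk.le hr₀.le) hb₀.le
  have hlt : r ^ k < 1 := rpow_lt_one hr₀.le hr₁ (by linarith)
  have hpos : 0 < b * (k - 1) * (1 - a) := mul_pos (mul_pos hb₀ (sub_pos.2 hk)) (sub_pos.2 ha)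
  linear_combination hAM + mul_lt_mul_of_pos_left hlt hpos + hab - a * b * k * hmul

lemma tendsto_one_sub_mul_div_one_sub_mul_rpow_nhdsGT_zero (a b : ℝ) {k : ℝ} (hk : 0 < k) :
    Tendsto (fun r : ℝ => (1 - a * r) / (1 - b * r ^ k)) (𝓝[>] 0) (𝓝 1) := by
  have hcont : ContinuousAt (fun r : ℝ => (1 - a * r) / (1 - b * r ^ k)) 0 := by
    have : (1 : ℝ) - b * 0 ^ k ≠ 0 := by simp [zero_rpow hk.ne']
    fun_prop (disch := first | assumption | exact Or.inr hk.le)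
  simpa [zero_rpow hk.ne'] using hcont.tendsto.mono_left nhdsWithin_le_nhds

lemma tendsto_one_sub_mul_div_one_sub_mul_rpow_nhdsLT_one (a b k : ℝ) (hb : b ≠ 1) :
    Tendsto (fun r : ℝ => (1 - a * r) / (1 - b * r ^ k)) (𝓝[<] 1) (𝓝 ((1 - a) / (1 - b))) := by
  have hcont : ContinuousAt (fun r : ℝ => (1 - a * r) / (1 - b * r ^ k)) 1 := by
    have : (1 : ℝ) - b * 1 ^ k ≠ 0 := by simpa [sub_eq_zero] using hb.symm
    fun_prop (disch := first | assumption | exact Or.inl one_ne_zero)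
  simpa using hcont.tendsto.mono_left nhdsWithin_le_nhds

/-- For `k > 1` and `θ ∈ (0, π/(2k))`, the function
`f₂(r) = (1 - (1 - sin θ) r)/(1 - (1 - sin kθ) r^k)` is strictly decreasing on
`(0,1)`, tends to `1` as `r → 0⁺` and to `sin θ / sin kθ` as `r → 1⁻`. -/
theorem f2_strictAnti (k : ℝ) (hk : 1 < k) (θ : ℝ) (hθ : θ ∈ Set.Ioo 0 (π / (2 * k))) :
    StrictAntiOn (fun r : ℝ =>
        (1 - (1 - Real.sin θ) * r) / (1 - (1 - Real.sin (k * θ)) * r ^ k))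
      (Set.Ioo (0 : ℝ) 1) ∧
    Tendsto (fun r : ℝ =>
        (1 - (1 - Real.sin θ) * r) / (1 - (1 - Real.sin (k * θ)) * r ^ k))
      (𝓝[>] 0) (𝓝 1) ∧
    Tendsto (fun r : ℝ =>
        (1 - (1 - Real.sin θ) * r) / (1 - (1 - Real.sin (k * θ)) * r ^ k))
      (𝓝[<] 1) (𝓝 (Real.sin θ / Real.sin (k * θ))) := by
  obtain ⟨hθ₀, hθk⟩ := hθ
  have hk₀ : 0 < k := by linarith
  have hkθ : k * θ < π / 2 := by
    rw [lt_div_iff₀ (by positivity)] at hθk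
    linarith
  have hθkθ : θ < k * θ := lt_mul_of_one_lt_left hθ₀ hk
  have hs : 0 < sin θ := sin_pos_of_pos_of_lt_pi hθ₀ (by linarith [pi_pos])
  have hS₀ : 0 < sin (k * θ) := sin_pos_of_pos_of_lt_pi (by linarith) (by linarith [pi_pos])
  have hS₁ : sin (k * θ) < 1 := by
    simpa using sin_lt_sin_of_lt_of_le_pi_div_two (by linarith [pi_pos]) le_rfl hkθ
  refine ⟨strictAntiOn_one_sub_mul_div_one_sub_mul_rpow hk (by linarith) (by linarith)
    (by linarith) ?_, ?_, ?_⟩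
  · simpa only [sub_sub_cancel] using mul_sin_mul_one_sub_sin_le hk.le hθ₀ hkθ.le
  · exact tendsto_one_sub_mul_div_one_sub_mul_rpow_nhdsGT_zero _ _ hk₀
  · simpa only [sub_sub_cancel] using
      tendsto_one_sub_mul_div_one_sub_mul_rpow_nhdsLT_one (1 - sin θ) (1 - sin (k * θ)) k
        (by linarith)
end

section
/- Let n be a positive integer, let 0 < θ ≤ π/(2n), and let x, y be nonzero complex numbers. Then 1 + |xⁿ − yⁿ|/(|x|ⁿ · sin nθ) ≤ (1 + |x − y|/(|x| · sin θ))ⁿ. -/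
/-!
Writing `xⁿ - yⁿ = x (xⁿ⁻¹ - yⁿ⁻¹) + (x - y) yⁿ⁻¹` and inducting gives
`|xⁿ - yⁿ| ≤ (|x| + |x - y|)ⁿ - |x|ⁿ = |x|ⁿ ((1 + t)ⁿ - 1)` with `t = |x - y| / |x|`.
Since `sin θ ≤ sin nθ` on `0 < nθ ≤ π/2`, it remains to show the real inequality
`1 + ((1 + t)ⁿ - 1) / s ≤ (1 + t / s)ⁿ` for `0 < s ≤ 1`, `t ≥ 0`, which is again an induction on `n`.
-/

open Real

theorem norm_pow_sub_pow_le {R : Type*} [SeminormedRing R] [NormOneClass R] (x y : R) (n : ℕ) :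
    ‖x ^ n - y ^ n‖ ≤ (‖x‖ + ‖x - y‖) ^ n - ‖x‖ ^ n := by
  induction n with
  | zero => simp
  | succ n ih =>
    have hy : ‖y‖ ≤ ‖x‖ + ‖x - y‖ := by
      simpa using norm_le_norm_add_norm_sub' y x |>.trans_eq (by rw [norm_sub_rev])
    calc ‖x ^ (n + 1) - y ^ (n + 1)‖
        = ‖x * (x ^ n - y ^ n) + (x - y) * y ^ n‖ := by simp only [pow_succ']; noncomm_ring
      _ ≤ ‖x‖ * ‖x ^ n - y ^ n‖ + ‖x - y‖ * ‖y‖ ^ n :=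
          (norm_add_le _ _).trans <| add_le_add (norm_mul_le _ _) <|
            (norm_mul_le _ _).trans <| by gcongr; exact norm_pow_le y n
      _ ≤ ‖x‖ * ((‖x‖ + ‖x - y‖) ^ n - ‖x‖ ^ n) + ‖x - y‖ * (‖x‖ + ‖x - y‖) ^ n := by
          gcongr
      _ = (‖x‖ + ‖x - y‖) ^ (n + 1) - ‖x‖ ^ (n + 1) := by ring

theorem one_add_pow_sub_one_div_le_one_add_div_pow (n : ℕ) {s t : ℝ} (hs : 0 < s) (hs1 : s ≤ 1)
    (ht : 0 ≤ t) : 1 + ((1 + t) ^ n - 1) / s ≤ (1 + t / s) ^ n := by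
  induction n with
  | zero => simp
  | succ n ih =>
    have hpow : 1 ≤ (1 + t) ^ n := one_le_pow₀ (by linarith)
    have hgap : 0 ≤ ((1 + t) ^ n - 1) * t * (1 - s) / s ^ 2 :=
      div_nonneg (mul_nonneg (mul_nonneg (sub_nonneg.2 hpow) ht) (sub_nonneg.2 hs1)) (sq_nonneg s)
    calc 1 + ((1 + t) ^ (n + 1) - 1) / s
        = (1 + ((1 + t) ^ n - 1) / s) * (1 + t / s) - ((1 + t) ^ n - 1) * t * (1 - s) / s ^ 2 := by
          field_simp; ring
      _ ≤ (1 + ((1 + t) ^ n - 1) / s) * (1 + t / s) := sub_le_self _ hgap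
      _ ≤ (1 + t / s) ^ n * (1 + t / s) := by gcongr
      _ = (1 + t / s) ^ (n + 1) := (pow_succ _ _).symm

theorem sin_le_sin_nat_mul {n : ℕ} (hn : 0 < n) {θ : ℝ} (hθ : 0 ≤ θ) (hnθ : n * θ ≤ π / 2) :
    sin θ ≤ sin (n * θ) :=
  sin_le_sin_of_le_of_le_pi_div_two (by linarith [pi_pos]) hnθ <|
    le_mul_of_one_le_left hθ (by exact_mod_cast hn)

theorem power_diff_ratio_ineq_general (n : ℕ) (hn : 0 < n) (θ : ℝ)
    (hθ0 : 0 < θ) (hθ : θ ≤ π / (2 * n)) (x y : ℂ) (hx : x ≠ 0) :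
    1 + ‖x ^ n - y ^ n‖ / (‖x‖ ^ n * Real.sin (n * θ)) ≤
      (1 + ‖x - y‖ / (‖x‖ * Real.sin θ)) ^ n := by
  have hnθ : n * θ ≤ π / 2 := by
    rw [le_div_iff₀ (by positivity)] at hθ; linarith
  have hsin : sin θ ≤ sin (n * θ) := sin_le_sin_nat_mul hn hθ0.le hnθ
  have hsin_pos : 0 < sin θ := sin_pos_of_pos_of_lt_pi hθ0 (by
    nlinarith [pi_pos, (Nat.one_le_cast (α := ℝ)).2 hn])
  have ha : 0 < ‖x‖ := norm_pos_iff.2 hx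
  set t := ‖x - y‖ / ‖x‖
  have ht : 0 ≤ t := by positivity
  have hnorm : ‖x ^ n - y ^ n‖ ≤ ‖x‖ ^ n * ((1 + t) ^ n - 1) := by
    have hscale : ‖x‖ + ‖x - y‖ = ‖x‖ * (1 + t) := by
      rw [mul_one_add, mul_div_cancel₀ _ ha.ne']
    calc ‖x ^ n - y ^ n‖ ≤ (‖x‖ + ‖x - y‖) ^ n - ‖x‖ ^ n := norm_pow_sub_pow_le x y n
      _ = ‖x‖ ^ n * ((1 + t) ^ n - 1) := by rw [hscale, mul_pow]; ring
  have hgrowth : 0 ≤ (1 + t) ^ n - 1 := sub_nonneg.2 (one_le_pow₀ (le_add_of_nonneg_right ht))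
  calc 1 + ‖x ^ n - y ^ n‖ / (‖x‖ ^ n * sin (n * θ))
      ≤ 1 + ‖x‖ ^ n * ((1 + t) ^ n - 1) / (‖x‖ ^ n * sin (n * θ)) := by
        have := hsin_pos.trans_le hsin
        gcongr
    _ = 1 + ((1 + t) ^ n - 1) / sin (n * θ) := by rw [mul_div_mul_left _ _ (by positivity)]
    _ ≤ 1 + ((1 + t) ^ n - 1) / sin θ := by gcongr
    _ ≤ (1 + t / sin θ) ^ n :=
        one_add_pow_sub_one_div_le_one_add_div_pow n hsin_pos (sin_le_one θ) ht
    _ = (1 + ‖x - y‖ / (‖x‖ * sin θ)) ^ n := by rw [div_div]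

/-- For a positive integer `n`, `0 < θ ≤ π/(2n)` and nonzero complex `x, y`:
`1 + |xⁿ - yⁿ|/(|x|ⁿ sin nθ) ≤ (1 + |x - y|/(|x| sin θ))ⁿ`. -/
theorem power_diff_ratio_ineq (n : ℕ) (hn : 0 < n) (θ : ℝ)
    (hθ0 : 0 < θ) (hθ : θ ≤ π / (2 * n)) (x y : ℂ) (hx : x ≠ 0) (hy : y ≠ 0) :
    1 + ‖x ^ n - y ^ n‖ / (‖x‖ ^ n * Real.sin (n * θ)) ≤
      (1 + ‖x - y‖ / (‖x‖ * Real.sin θ)) ^ n :=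
  power_diff_ratio_ineq_general n hn θ hθ0 hθ x y hx
end
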